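/- Let h : B'(R) × (−r_j, r_j) → ℝ be integrable, and define the vertical mean (h̄)_j(x') = (1/(2r_j)) ∫_{−r_j}^{r_j} h(x', ω) dω. Then for r_k ≤ r_j, exponents 1 ≤ ℓ, q_h, q_v ≤ ∞, and h with ∂₃h ∈ L^ℓ_v L^{q_h}_h, one has ‖h − (h̄)_j‖_{L^{q_v}_v L^{q_h}_h(B'(R)×(−r_k, r_k))} ≤ C r_k^{1/q_v} r_j^{1 − 1/ℓ} ‖∂₃ h‖_{L^ℓ_v L^{q_h}_h(B'(R)×(−r_j, r_j))}. -/

import Mathlib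

open MeasureTheory Metric ENNReal

noncomputable section

/-- The anisotropic norm `‖g‖_{L^{q_v}_v L^{q_h}_h (B'(R) × (−r, r))}`:
first the `L^{q_h}` norm in the horizontal variables over the disk `B'(R)`,
then the `L^{q_v}` norm in the vertical variable over `(−r, r)`. -/
def aniNorm (g : EuclideanSpace ℝ (Fin 2) × ℝ → ℝ) (R r : ℝ) (qv qh : ℝ≥0∞) : ℝ≥0∞ :=
  eLpNorm (fun x3 =>
      (eLpNorm (fun x' => g (x', x3)) qh
        (volume.restrict (ball (0 : EuclideanSpace ℝ (Fin 2)) R))).toReal)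
    qv (volume.restrict (Set.Ioo (-r) r))

/-- The vertical mean `(h̄)_j(x') = (1/(2 r_j)) ∫_{−r_j}^{r_j} h(x', ω) dω`,
with `r_j = 2^{−j}`. -/
def vmean (h : EuclideanSpace ℝ (Fin 2) × ℝ → ℝ) (j : ℕ)
    (x' : EuclideanSpace ℝ (Fin 2)) : ℝ :=
  (1 / (2 * (2 : ℝ) ^ (-(j : ℝ)))) *
    ∫ ω in Set.Ioo (-((2 : ℝ) ^ (-(j : ℝ)))) ((2 : ℝ) ^ (-(j : ℝ))), h (x', ω)

/-!
For `x₃ ∈ (−r_j, r_j)` the vertical mean of `h(x', ·)` lies between two values of `h(x', ·)` on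
`(−r_j, r_j)`, so the fundamental theorem of calculus gives
`|h(x', x₃) − h̄_j(x')| ≤ ∫_{−r_j}^{r_j} |∂₃h(x', t)| dt`. Minkowski's integral inequality moves the
`L^{q_h}` norm in `x'` inside the `t`-integral, and Hölder's inequality on `(−r_j, r_j)` bounds the
result by `(2 r_j)^{1 − 1/ℓ} ‖∂₃h‖_{L^ℓ_v L^{q_h}_h}`. This bound is uniform in `x₃ ∈ (−r_k, r_k)`,
so the vertical `L^{q_v}` norm only adds the factor `(2 r_k)^{1/q_v}`; as both exponents lie in
`[0, 1]`, each power of `2` is at most `2`, whence `C = 4`.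
-/

open Set Function

section Minkowski

variable {α β : Type*} [MeasurableSpace α] [MeasurableSpace β] {μ : Measure α} {ν : Measure β}
  [SFinite μ] [SFinite ν]

theorem lintegral_rpow_lintegral_le {F : α → β → ℝ≥0∞} (hF : Measurable (uncurry F))
    {p : ℝ} (hp : 1 ≤ p) (hfin : ∫⁻ x, (∫⁻ t, F x t ∂ν) ^ p ∂μ ≠ ∞) :
    (∫⁻ x, (∫⁻ t, F x t ∂ν) ^ p ∂μ) ^ (1 / p) ≤ ∫⁻ t, (∫⁻ x, F x t ^ p ∂μ) ^ (1 / p) ∂ν := by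
  rcases hp.eq_or_lt with rfl | hp
  · simpa using (lintegral_lintegral_swap hF.aemeasurable).le
  set q := p.conjExponent
  have hpq : p.HolderConjugate q := .conjExponent hp
  set G : α → ℝ≥0∞ := fun x => ∫⁻ t, F x t ∂ν
  set I := ∫⁻ x, G x ^ p ∂μ
  rcases eq_or_ne I 0 with hI | hI
  · rw [hI, ENNReal.zero_rpow_of_pos (one_div_pos.mpr hpq.pos)]
    exact bot_le
  have hGp : Measurable fun x => G x ^ (p - 1) := hF.lintegral_prod_right'.pow_const _
  have hF_left (x : α) : Measurable (F x) := hF.comp measurable_prodMk_left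
  have hF_right (t : β) : Measurable (F · t) := hF.comp measurable_prodMk_right
  have hIq : I ^ (1 / q) ≠ ∞ := ENNReal.rpow_ne_top_of_nonneg (one_div_pos.mpr hpq.symm.pos).le hfin
  -- `G ^ p = G ^ (p - 1) * G`, then Tonelli and Hölder with exponents `p` and `q` in `x`
  have key : I ≤ (∫⁻ t, (∫⁻ x, F x t ^ p ∂μ) ^ (1 / p) ∂ν) * I ^ (1 / q) := calc
    I = ∫⁻ x, ∫⁻ t, G x ^ (p - 1) * F x t ∂ν ∂μ := by
        refine lintegral_congr fun x => ?_
        rw [lintegral_const_mul _ (hF_left x), ← ENNReal.rpow_one (∫⁻ t, F x t ∂ν),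
          ← ENNReal.rpow_add_of_nonneg _ _ (by linarith) zero_le_one, sub_add_cancel]
    _ = ∫⁻ t, ∫⁻ x, G x ^ (p - 1) * F x t ∂μ ∂ν :=
        lintegral_lintegral_swap ((hGp.comp measurable_fst).mul hF).aemeasurable
    _ ≤ ∫⁻ t, (∫⁻ x, F x t ^ p ∂μ) ^ (1 / p) * I ^ (1 / q) ∂ν := by
        refine lintegral_mono fun t => ?_
        calc ∫⁻ x, G x ^ (p - 1) * F x t ∂μ
            = ∫⁻ x, ((fun x => F x t) * fun x => G x ^ (p - 1)) x ∂μ :=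
              lintegral_congr fun x => mul_comm _ _
          _ ≤ _ := ENNReal.lintegral_mul_le_Lp_mul_Lq μ hpq (hF_right t).aemeasurable
              hGp.aemeasurable
          _ = _ := by
              simp only [← ENNReal.rpow_mul, hpq.sub_one_mul_conj]
              rfl
    _ = _ := lintegral_mul_const' _ _ hIq
  have hsplit : I ^ (1 / p) * I ^ (1 / q) = I := by
    rw [← ENNReal.rpow_add_of_nonneg _ _ (one_div_pos.mpr hpq.pos).le
      (one_div_pos.mpr hpq.symm.pos).le, one_div, one_div, hpq.inv_add_inv_eq_one,
      ENNReal.rpow_one]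
  exact (ENNReal.mul_le_mul_iff_left (ENNReal.rpow_pos (pos_iff_ne_zero.mpr hI) hfin).ne'
    hIq).mp (hsplit.le.trans key)

theorem eLpNorm_lintegral_le_lintegral_eLpNorm {F : α → β → ℝ≥0∞} (hF : Measurable (uncurry F))
    {q : ℝ≥0∞} (hq : 1 ≤ q) (hq_top : q ≠ ∞)
    (hfin : eLpNorm (fun x => ∫⁻ t, F x t ∂ν) q μ ≠ ∞) :
    eLpNorm (fun x => ∫⁻ t, F x t ∂ν) q μ ≤ ∫⁻ t, eLpNorm (F · t) q μ ∂ν := by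
  have hq0 : q ≠ 0 := (zero_lt_one.trans_le hq).ne'
  have hq1 : 1 ≤ q.toReal := by simpa using ENNReal.toReal_mono hq_top hq
  simp only [eLpNorm_eq_lintegral_rpow_enorm_toReal hq0 hq_top, enorm_eq_self] at hfin ⊢
  refine lintegral_rpow_lintegral_le hF hq1 fun h => hfin ?_
  rw [h, ENNReal.top_rpow_of_pos (one_div_pos.mpr (zero_lt_one.trans_le hq1))]

end Minkowski

theorem eLpNorm_restrict_ne_top_of_forall_enorm_le {α ε : Type*} [MeasurableSpace α]
    [TopologicalSpace ε] [ESeminormedAddMonoid ε] {μ : Measure α} {U : Set α} {g : α → ε}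
    {C : ℝ≥0∞} (hC : C ≠ ∞) (hU : MeasurableSet U) (hμU : μ U ≠ ∞) (hg : ∀ x ∈ U, ‖g x‖ₑ ≤ C) (q : ℝ≥0∞) :
    eLpNorm g q (μ.restrict U) ≠ ∞ := by
  refine (eLpNorm_le_of_ae_enorm_bound (ae_restrict_of_forall_mem hU hg)).trans_lt ?_ |>.ne
  rw [Measure.restrict_apply_univ, smul_eq_mul]
  exact ENNReal.mul_lt_top hC.lt_top
    (ENNReal.rpow_ne_top_of_nonneg (inv_nonneg.mpr ENNReal.toReal_nonneg) hμU).lt_top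

section ContinuousSlices

variable {X : Type*} [TopologicalSpace X] [MeasurableSpace X] {μ : Measure X} {U K : Set X}
  {E : Type*} [NormedAddCommGroup E] {f : X × ℝ → E}

theorem essSup_restrict_eq_biSup [OpensMeasurableSpace X] [μ.IsOpenPosMeasure] {g : X → ℝ≥0∞}
    (hg : Continuous g) (hU : IsOpen U) : essSup g (μ.restrict U) = ⨆ x ∈ U, g x := by
  rw [← essSup_indicator_eq_essSup_restrict hU.measurableSet, ← iSup_eq_essSup]
  · exact iSup_congr fun x => by by_cases hx : x ∈ U <;> simp [hx]
  intro x a ha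
  have hx : x ∈ U := by
    by_contra hx
    simp [hx] at ha
  refine fun h0 => ((isOpen_lt (continuous_const (y := a)) hg).inter hU).measure_ne_zero μ
    ⟨x, ?_, hx⟩ (measure_mono_null ?_ h0)
  · simpa [hx] using ha
  · rintro y ⟨hy, hyU⟩
    simpa [hyU] using hy

theorem eLpNorm_top_restrict_slice_eq_biSup [OpensMeasurableSpace X] [μ.IsOpenPosMeasure]
    (hf : Continuous f) (hU : IsOpen U) (t : ℝ) :
    eLpNorm (fun x => f (x, t)) ∞ (μ.restrict U) = ⨆ x ∈ U, ‖f (x, t)‖ₑ := by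
  rw [eLpNorm_exponent_top, eLpNormEssSup_eq_essSup_enorm]
  exact essSup_restrict_eq_biSup (hf.comp (.prodMk_left t)).enorm hU

theorem measurable_eLpNorm_restrict_slice [OpensMeasurableSpace X] [μ.IsOpenPosMeasure]
    [SFinite μ] (hf : Continuous f) (hU : IsOpen U) (q : ℝ≥0∞) :
    Measurable fun t => eLpNorm (fun x => f (x, t)) q (μ.restrict U) := by
  rcases eq_or_ne q ∞ with rfl | hq_top
  · simp_rw [eLpNorm_top_restrict_slice_eq_biSup hf hU]
    exact (lowerSemicontinuous_biSup fun x _ =>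
      (hf.comp (.prodMk_right x)).enorm.lowerSemicontinuous).measurable
  rcases eq_or_ne q 0 with rfl | hq0
  · simp
  simp_rw [eLpNorm_eq_lintegral_rpow_enorm_toReal hq0 hq_top]
  exact (Measurable.lintegral_prod_left' (hf.enorm.measurable.pow_const _)).pow_const _

theorem eLpNorm_lintegral_slice_le [OpensMeasurableSpace X] [μ.IsOpenPosMeasure] [SFinite μ]
    (hf : Continuous f) (hU : IsOpen U) {ν : Measure ℝ} [SFinite ν] {q : ℝ≥0∞} (hq : 1 ≤ q)
    (hfin : eLpNorm (fun x => ∫⁻ t, ‖f (x, t)‖ₑ ∂ν) q (μ.restrict U) ≠ ∞) :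
    eLpNorm (fun x => ∫⁻ t, ‖f (x, t)‖ₑ ∂ν) q (μ.restrict U) ≤
      ∫⁻ t, eLpNorm (fun x => f (x, t)) q (μ.restrict U) ∂ν := by
  rcases eq_or_ne q ∞ with rfl | hq_top
  · simp_rw [eLpNorm_top_restrict_slice_eq_biSup hf hU, eLpNorm_exponent_top]
    refine eLpNormEssSup_le_of_ae_enorm_bound (ae_restrict_of_forall_mem hU.measurableSet
      fun x hx => ?_)
    exact lintegral_mono fun t => le_biSup (fun y => ‖f (y, t)‖ₑ) hx
  simp_rw [← eLpNorm_enorm fun x => f (x, _)]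
  exact eLpNorm_lintegral_le_lintegral_eLpNorm hf.enorm.measurable hq hq_top hfin

theorem eLpNorm_restrict_ne_top_of_continuous [IsFiniteMeasureOnCompacts μ] {g : X → E}
    (hg : Continuous g) (hK : IsCompact K) (hUK : U ⊆ K) (hU : MeasurableSet U) (q : ℝ≥0∞) :
    eLpNorm g q (μ.restrict U) ≠ ∞ := by
  obtain ⟨M, hM⟩ := hK.exists_bound_of_continuousOn hg.continuousOn
  refine eLpNorm_restrict_ne_top_of_forall_enorm_le (C := ENNReal.ofReal M) ofReal_ne_top hU
    ((measure_mono hUK).trans_lt hK.measure_lt_top).ne (fun x hx => ?_) q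
  rw [← ofReal_norm]
  exact ofReal_le_ofReal (hM x (hUK hx))

theorem eLpNorm_setLIntegral_slice_ne_top [IsFiniteMeasureOnCompacts μ] (hf : Continuous f)
    (hK : IsCompact K) (hUK : U ⊆ K) (hU : MeasurableSet U) (a b : ℝ) (q : ℝ≥0∞) :
    eLpNorm (fun x => ∫⁻ t in Ioo a b, ‖f (x, t)‖ₑ) q (μ.restrict U) ≠ ∞ := by
  obtain ⟨M, hM⟩ :=
    (hK.prod (isCompact_Icc (a := a) (b := b))).exists_bound_of_continuousOn hf.continuousOn
  refine eLpNorm_restrict_ne_top_of_forall_enorm_le (C := ENNReal.ofReal M * volume (Ioo a b))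
    (ENNReal.mul_ne_top ofReal_ne_top measure_Ioo_lt_top.ne) hU
    ((measure_mono hUK).trans_lt hK.measure_lt_top).ne (fun x hx => ?_) q
  calc ‖∫⁻ t in Ioo a b, ‖f (x, t)‖ₑ‖ₑ ≤ ∫⁻ _ in Ioo a b, ENNReal.ofReal M := by
        rw [enorm_eq_self]
        refine setLIntegral_mono measurable_const fun t ht => ?_
        rw [← ofReal_norm]
        exact ofReal_le_ofReal (hM (x, t) ⟨hUK hx, Ioo_subset_Icc_self ht⟩)
    _ = ENNReal.ofReal M * volume (Ioo a b) := setLIntegral_const _ _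

end ContinuousSlices
theorem abs_sub_setAverage_le {α : Type*} [MeasurableSpace α] {μ : Measure α} {s : Set α}
    {φ : α → ℝ} (hs₀ : μ s ≠ 0) (hs : μ s ≠ ∞) (hφ : IntegrableOn φ s μ) {x : α} {B : ℝ}
    (hB : ∀ ω ∈ s, |φ x - φ ω| ≤ B) : |φ x - ⨍ ω in s, φ ω ∂μ| ≤ B := by
  obtain ⟨ω₁, hω₁, h₁⟩ := exists_le_setAverage hs₀ hs hφ
  obtain ⟨ω₂, hω₂, h₂⟩ := exists_setAverage_le hs₀ hs hφ
  have := abs_le.mp (hB ω₁ hω₁)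
  have := abs_le.mp (hB ω₂ hω₂)
  exact abs_le.mpr ⟨by linarith, by linarith⟩

theorem norm_sub_le_setIntegral_norm_deriv {E : Type*} [NormedAddCommGroup E] [NormedSpace ℝ E]
    [CompleteSpace E] {φ : ℝ → E} (hφ : ContDiff ℝ 1 φ) {a b x y : ℝ} (hx : x ∈ Ioo a b)
    (hy : y ∈ Ioo a b) : ‖φ x - φ y‖ ≤ ∫ t in Ioo a b, ‖deriv φ t‖ := by
  have hφ' : Continuous (deriv φ) := hφ.continuous_deriv le_rfl
  rw [← intervalIntegral.integral_deriv_eq_sub (fun t _ => hφ.differentiable one_ne_zero t)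
    (hφ'.intervalIntegrable _ _)]
  refine (intervalIntegral.norm_integral_le_integral_norm_uIoc).trans
    (setIntegral_mono_set (hφ'.norm.integrableOn_Icc.mono_set Ioo_subset_Icc_self)
      (ae_of_all _ fun t => norm_nonneg _) (LE.le.eventuallyLE ?_))
  rintro t ⟨ht₁, ht₂⟩
  exact ⟨(lt_min hy.1 hx.1).trans ht₁, ht₂.trans_lt (max_lt hy.2 hx.2)⟩

theorem abs_sub_setAverage_Ioo_le {φ : ℝ → ℝ} (hφ : ContDiff ℝ 1 φ) {a b x : ℝ}
    (hx : x ∈ Ioo a b) : |φ x - ⨍ ω in Ioo a b, φ ω| ≤ ∫ t in Ioo a b, |deriv φ t| := by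
  have hab : a < b := hx.1.trans hx.2
  refine abs_sub_setAverage_le (by simpa using hab) (by simp)
    (hφ.continuous.integrableOn_Icc.mono_set Ioo_subset_Icc_self) fun ω hω => ?_
  simpa only [Real.norm_eq_abs] using norm_sub_le_setIntegral_norm_deriv hφ hx hω

theorem deriv_slice_eq_fderiv {E F : Type*} [NormedAddCommGroup E] [NormedSpace ℝ E]
    [NormedAddCommGroup F] [NormedSpace ℝ F] {h : E × ℝ → F} (hh : Differentiable ℝ h)
    (x : E) (t : ℝ) : deriv (fun s => h (x, s)) t = fderiv ℝ h (x, t) (0, 1) :=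
  ((hh (x, t)).hasFDerivAt.comp_hasDerivAt t
    ((hasDerivAt_const t x).prodMk (hasDerivAt_id t))).deriv

theorem continuous_deriv_slice {E F : Type*} [NormedAddCommGroup E] [NormedSpace ℝ E]
    [NormedAddCommGroup F] [NormedSpace ℝ F] {h : E × ℝ → F} (hh : ContDiff ℝ 1 h) :
    Continuous fun p : E × ℝ => deriv (fun s => h (p.1, s)) p.2 := by
  simp_rw [deriv_slice_eq_fderiv (hh.differentiable one_ne_zero)]
  exact (hh.continuous_fderiv one_ne_zero).clm_apply continuous_const

section Holder

variable {β : Type*} [MeasurableSpace β] {ν : Measure β} {S : β → ℝ≥0∞}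

theorem lintegral_le_eLpNorm_toReal_mul_measure_rpow (hS : Measurable S) (hS_top : ∀ t, S t ≠ ∞)
    {ℓ : ℝ≥0∞} (hℓ : 1 ≤ ℓ) :
    ∫⁻ t, S t ∂ν ≤ eLpNorm (fun t => (S t).toReal) ℓ ν * ν univ ^ (1 - (1 / ℓ).toReal) := by
  have hS_one : ∫⁻ t, S t ∂ν = eLpNorm (fun t => (S t).toReal) 1 ν := by
    rw [eLpNorm_one_eq_lintegral_enorm]
    refine lintegral_congr fun t => ?_
    rw [Real.enorm_of_nonneg ENNReal.toReal_nonneg, ENNReal.ofReal_toReal (hS_top t)]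
  refine (hS_one.trans_le (eLpNorm_le_eLpNorm_mul_rpow_measure_univ hℓ
    (ENNReal.measurable_toReal.comp hS).aestronglyMeasurable)).trans_eq ?_
  rw [ENNReal.toReal_one, ENNReal.toReal_div, ENNReal.toReal_one, div_one]

theorem eLpNorm_toReal_restrict_le {s : Set β} (hs : MeasurableSet s) {M : ℝ≥0∞}
    (hM : ∀ t ∈ s, S t ≤ M) (q : ℝ≥0∞) :
    eLpNorm (fun t => (S t).toReal) q (ν.restrict s) ≤ ν s ^ q.toReal⁻¹ * M := by
  refine (eLpNorm_le_of_ae_enorm_bound (C := M)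
    (ae_restrict_of_forall_mem hs fun t ht => ?_)).trans_eq ?_
  · rw [Real.enorm_of_nonneg ENNReal.toReal_nonneg]
    exact ENNReal.ofReal_toReal_le.trans (hM t ht)
  · rw [Measure.restrict_apply_univ, smul_eq_mul, mul_comm]

end Holder

theorem volume_Ioo_neg_rpow_le {r e : ℝ} (hr : 0 ≤ r) (he₀ : 0 ≤ e) (he₁ : e ≤ 1) :
    volume (Ioo (-r) r) ^ e ≤ 2 * ENNReal.ofReal (r ^ e) := by
  rw [Real.volume_Ioo, sub_neg_eq_add, ← two_mul, ENNReal.ofReal_rpow_of_nonneg (by positivity) he₀,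
    Real.mul_rpow zero_le_two hr, ENNReal.ofReal_mul (by positivity)]
  gcongr
  calc ENNReal.ofReal (2 ^ e) ≤ ENNReal.ofReal (2 ^ (1 : ℝ)) :=
        ofReal_le_ofReal (Real.rpow_le_rpow_of_exponent_le one_le_two he₁)
    _ = 2 := by simp

theorem toReal_one_div_le_one {q : ℝ≥0∞} (hq : 1 ≤ q) : (1 / q).toReal ≤ 1 := by
  refine ENNReal.toReal_le_of_le_ofReal zero_le_one ?_
  rw [ENNReal.ofReal_one, one_div]
  exact ENNReal.inv_le_one.mpr hq

section VerticalMean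

variable {h : EuclideanSpace ℝ (Fin 2) × ℝ → ℝ}

theorem vmean_eq_setAverage (j : ℕ) (x' : EuclideanSpace ℝ (Fin 2)) :
    vmean h j x' = ⨍ ω in Ioo (-((2 : ℝ) ^ (-(j : ℝ)))) ((2 : ℝ) ^ (-(j : ℝ))), h (x', ω) := by
  have hr : 0 < (2 : ℝ) ^ (-(j : ℝ)) := by positivity
  rw [vmean, setAverage_eq, Real.volume_real_Ioo_of_le (by linarith), smul_eq_mul]
  congr 1
  ring

theorem enorm_sub_vmean_le (hh : ContDiff ℝ 1 h) (j : ℕ) (x' : EuclideanSpace ℝ (Fin 2))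
    {x₃ : ℝ} (hx₃ : x₃ ∈ Ioo (-((2 : ℝ) ^ (-(j : ℝ)))) ((2 : ℝ) ^ (-(j : ℝ)))) :
    ‖h (x', x₃) - vmean h j x'‖ₑ ≤
      ∫⁻ t in Ioo (-((2 : ℝ) ^ (-(j : ℝ)))) ((2 : ℝ) ^ (-(j : ℝ))),
        ‖deriv (fun s => h (x', s)) t‖ₑ := by
  have hφ : ContDiff ℝ 1 fun s => h (x', s) := hh.comp (contDiff_const.prodMk contDiff_id)
  rw [vmean_eq_setAverage, ← ofReal_integral_norm_eq_lintegral_enorm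
    ((hφ.continuous_deriv le_rfl).integrableOn_Icc.mono_set Ioo_subset_Icc_self),
    Real.enorm_eq_ofReal_abs]
  simp only [Real.norm_eq_abs]
  exact ofReal_le_ofReal (abs_sub_setAverage_Ioo_le hφ hx₃)

theorem eLpNorm_sub_vmean_le (hh : ContDiff ℝ 1 h) (R : ℝ) (j : ℕ) {qh : ℝ≥0∞} (hqh : 1 ≤ qh)
    {x₃ : ℝ} (hx₃ : x₃ ∈ Ioo (-((2 : ℝ) ^ (-(j : ℝ)))) ((2 : ℝ) ^ (-(j : ℝ)))) :
    eLpNorm (fun x' => h (x', x₃) - vmean h j x') qh (volume.restrict (ball 0 R)) ≤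
      ∫⁻ t in Ioo (-((2 : ℝ) ^ (-(j : ℝ)))) ((2 : ℝ) ^ (-(j : ℝ))),
        eLpNorm (fun x' => deriv (fun s => h (x', s)) t) qh (volume.restrict (ball 0 R)) := by
  have hd := continuous_deriv_slice hh
  refine (eLpNorm_mono_enorm fun x' =>
    (enorm_sub_vmean_le hh j x' hx₃).trans_eq (enorm_eq_self _).symm).trans ?_
  exact eLpNorm_lintegral_slice_le hd isOpen_ball hqh (eLpNorm_setLIntegral_slice_ne_top hd
    (isCompact_closedBall 0 R) ball_subset_closedBall measurableSet_ball _ _ _)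

theorem eLpNorm_sub_vmean_le_aniNorm (hh : ContDiff ℝ 1 h) (R : ℝ) (j : ℕ) {ℓ qh : ℝ≥0∞}
    (hℓ : 1 ≤ ℓ) (hqh : 1 ≤ qh) {x₃ : ℝ}
    (hx₃ : x₃ ∈ Ioo (-((2 : ℝ) ^ (-(j : ℝ)))) ((2 : ℝ) ^ (-(j : ℝ)))) :
    eLpNorm (fun x' => h (x', x₃) - vmean h j x') qh (volume.restrict (ball 0 R)) ≤
      volume (Ioo (-((2 : ℝ) ^ (-(j : ℝ)))) ((2 : ℝ) ^ (-(j : ℝ)))) ^ (1 - (1 / ℓ).toReal) *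
        aniNorm (fun x => deriv (fun t => h (x.1, t)) x.2) R ((2 : ℝ) ^ (-(j : ℝ))) ℓ qh := by
  have hd := continuous_deriv_slice hh
  -- `aniNorm` takes `toReal` of the slice norms, so these must be finite
  have hS_top (t : ℝ) : eLpNorm (fun x' => deriv (fun s => h (x', s)) t) qh
      (volume.restrict (ball 0 R)) ≠ ∞ :=
    eLpNorm_restrict_ne_top_of_continuous (hd.comp (.prodMk_left t)) (isCompact_closedBall 0 R)
      ball_subset_closedBall measurableSet_ball qh
  refine (eLpNorm_sub_vmean_le hh R j hqh hx₃).trans <|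
    (lintegral_le_eLpNorm_toReal_mul_measure_rpow
      (measurable_eLpNorm_restrict_slice hd isOpen_ball qh) hS_top hℓ).trans_eq ?_
  rw [Measure.restrict_apply_univ, mul_comm]
  rfl

end VerticalMean

/-- Poincaré inequality (Lemma A.3, first part): for `r_k ≤ r_j`,
`‖h − (h̄)_j‖_{L^{q_v}_v L^{q_h}_h(B'(R)×(−r_k,r_k))}
  ≤ C r_k^{1/q_v} r_j^{1−1/ℓ} ‖∂₃h‖_{L^ℓ_v L^{q_h}_h(B'(R)×(−r_j,r_j))}`,
with `C` independent of `j, k, R`. -/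
theorem stmt1 : ∃ C : ℝ≥0∞, 0 < C ∧ C ≠ ⊤ ∧
    ∀ (R : ℝ) (j k : ℕ) (h : EuclideanSpace ℝ (Fin 2) × ℝ → ℝ) (ℓ qh qv : ℝ≥0∞),
      0 < R → j ≤ k → 1 ≤ ℓ → 1 ≤ qh → 1 ≤ qv → ContDiff ℝ 1 h →
      aniNorm (fun x => h x - vmean h j x.1) R ((2 : ℝ) ^ (-(k : ℝ))) qv qh ≤
        C * ENNReal.ofReal (((2 : ℝ) ^ (-(k : ℝ))) ^ (1 / qv).toReal *
            ((2 : ℝ) ^ (-(j : ℝ))) ^ (1 - (1 / ℓ).toReal)) *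
          aniNorm (fun x => deriv (fun t => h (x.1, t)) x.2) R
            ((2 : ℝ) ^ (-(j : ℝ))) ℓ qh := by
  refine ⟨4, by norm_num, by norm_num, fun R j k h ℓ qh qv _ hjk hℓ hqh hqv hh => ?_⟩
  set rj : ℝ := (2 : ℝ) ^ (-(j : ℝ))
  set rk : ℝ := (2 : ℝ) ^ (-(k : ℝ))
  set N := aniNorm (fun x => deriv (fun t => h (x.1, t)) x.2) R rj ℓ qh
  have hrkj : rk ≤ rj := Real.rpow_le_rpow_of_exponent_le one_le_two (by simpa using hjk)
  have hslice (x₃ : ℝ) (hx₃ : x₃ ∈ Ioo (-rk) rk) :=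
    eLpNorm_sub_vmean_le_aniNorm hh R j hℓ hqh (x₃ := x₃)
      ⟨by linarith [hx₃.1], by linarith [hx₃.2]⟩
  calc aniNorm (fun x => h x - vmean h j x.1) R rk qv qh
      ≤ volume (Ioo (-rk) rk) ^ (1 / qv).toReal *
          (volume (Ioo (-rj) rj) ^ (1 - (1 / ℓ).toReal) * N) := by
        refine (eLpNorm_toReal_restrict_le (ν := volume) measurableSet_Ioo hslice qv).trans_eq ?_
        rw [one_div qv, ENNReal.toReal_inv]
    _ ≤ 2 * ENNReal.ofReal (rk ^ (1 / qv).toReal) *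
          (2 * ENNReal.ofReal (rj ^ (1 - (1 / ℓ).toReal)) * N) := by
        gcongr
        · exact volume_Ioo_neg_rpow_le (by positivity) toReal_nonneg (toReal_one_div_le_one hqv)
        · exact volume_Ioo_neg_rpow_le (by positivity)
            (sub_nonneg.mpr (toReal_one_div_le_one hℓ)) (by simp)
    _ = 4 * ENNReal.ofReal (rk ^ (1 / qv).toReal * rj ^ (1 - (1 / ℓ).toReal)) * N := by
        rw [ENNReal.ofReal_mul (by positivity)]
        ring
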